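/- Let x be a complex number and α a complex number such that neither 2α nor α+1/2 is a nonpositive integer. Then ₁F₁(α; 2α; 2x) = e^x · ₀F₁(—; α+1/2; x²/4). -/
import Mathlib


/-- Pochhammer symbol (rising factorial) `(c)_k = c (c+1) ⋯ (c+k-1)` for complex `c`. -/
noncomputable def poch (c : ℂ) (k : ℕ) : ℂ := ∏ l ∈ Finset.range k, (c + l)

/-- Generalized hypergeometric series `ₚF_q(a; b; x) = Σ_k (a₁)_k⋯(a_p)_k / ((b₁)_k⋯(b_q)_k) · x^k/k!`. -/
noncomputable def pFq (a b : List ℂ) (x : ℂ) : ℂ :=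
  ∑' k : ℕ, ((a.map (fun c => poch c k)).prod / (b.map (fun c => poch c k)).prod)
    * x ^ k / (Nat.factorial k)


lemma poch_zero (c : ℂ) : poch c 0 = 1 := by simp [poch]

lemma poch_succ (c : ℂ) (k : ℕ) : poch c (k+1) = poch c k * (c + k) := by
  simp [poch, Finset.prod_range_succ]

lemma poch_ne_zero {c : ℂ} (h : ∀ l : ℕ, c + l ≠ 0) (k : ℕ) : poch c k ≠ 0 := by
  rw [poch, Finset.prod_ne_zero_iff]
  exact fun l _ => h l

/-- Term of the Cauchy-product coefficient: `1/(4^j j! (b)_j (n-2j)!)` when `2j ≤ n`, else 0. -/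
noncomputable def kt (b : ℂ) (n j : ℕ) : ℂ :=
  if 2*j ≤ n then ((4:ℂ)^j * (Nat.factorial j) * poch b j * (Nat.factorial (n - 2*j)))⁻¹ else 0

noncomputable def ku (b : ℂ) (n j : ℕ) : ℂ := ((n : ℂ) - 2*(j : ℂ)) * kt b n j

noncomputable def kD (b : ℂ) (n : ℕ) : ℂ := ∑ j ∈ Finset.range (n+1), kt b n j

lemma key0 {b : ℂ} (hb : ∀ l : ℕ, b + l ≠ 0) (n : ℕ) :
    ((n:ℂ)+1) * ((n:ℂ) + 2*b - 1) * kt b (n+1) 0 =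
      (2*(n:ℂ) + 2*b - 1) * kt b n 0 - ku b n 0 := by
  have h1 : kt b (n+1) 0 = ((Nat.factorial (n+1) : ℂ))⁻¹ := by
    simp [kt, poch_zero]
  have h2 : kt b n 0 = ((Nat.factorial n : ℂ))⁻¹ := by
    simp [kt, poch_zero]
  rw [ku, h1, h2, Nat.factorial_succ]
  have hf : (Nat.factorial n : ℂ) ≠ 0 := Nat.cast_ne_zero.2 (Nat.factorial_ne_zero n)
  have hn : ((n:ℂ) + 1) ≠ 0 := by
    have := Nat.cast_ne_zero (R := ℂ).2 (Nat.succ_ne_zero n)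
    push_cast at this; exact this
  push_cast
  field_simp
  ring

lemma key {b : ℂ} (hb : ∀ l : ℕ, b + l ≠ 0) (n j : ℕ) :
    ((n:ℂ)+1) * ((n:ℂ) + 2*b - 1) * kt b (n+1) (j+1) =
      (2*(n:ℂ) + 2*b - 1) * kt b n (j+1) + ku b n j - ku b n (j+1) := by
  have hf : ∀ m : ℕ, (Nat.factorial m : ℂ) ≠ 0 :=
    fun m => Nat.cast_ne_zero.2 (Nat.factorial_ne_zero m)
  have h4 : ((4:ℂ))^j ≠ 0 := pow_ne_zero _ (by norm_num)
  have hP : poch b j ≠ 0 := poch_ne_zero hb j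
  have hbj : b + (j:ℂ) ≠ 0 := hb j
  rcases le_or_gt (2*(j+1)) n with hA | hA
  · -- case A : 2(j+1) ≤ n, write n = m + 2j + 2
    obtain ⟨m, rfl⟩ : ∃ m, n = m + 2*j + 2 := ⟨n - (2*j+2), by omega⟩
    have d1 : m + 2*j + 2 + 1 - 2*(j+1) = m+1 := by omega
    have d2 : m + 2*j + 2 - 2*(j+1) = m := by omega
    have d3 : m + 2*j + 2 - 2*j = m+2 := by omega
    have e1 : kt b (m + 2*j + 2 + 1) (j+1) =
        ((4:ℂ)^(j+1) * (Nat.factorial (j+1)) * poch b (j+1) * (Nat.factorial (m+1)))⁻¹ := by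
      rw [kt, if_pos (by omega), d1]
    have e2 : kt b (m + 2*j + 2) (j+1) =
        ((4:ℂ)^(j+1) * (Nat.factorial (j+1)) * poch b (j+1) * (Nat.factorial m))⁻¹ := by
      rw [kt, if_pos (by omega), d2]
    have e3 : kt b (m + 2*j + 2) j =
        ((4:ℂ)^j * (Nat.factorial j) * poch b j * (Nat.factorial (m+2)))⁻¹ := by
      rw [kt, if_pos (by omega), d3]
    simp only [ku]
    rw [e1, e2, e3, poch_succ, pow_succ, Nat.factorial_succ j,
      Nat.factorial_succ (m+1), Nat.factorial_succ m]
    have hj1 : ((j:ℂ) + 1) ≠ 0 := by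
      have := Nat.cast_ne_zero (R := ℂ).2 (Nat.succ_ne_zero j)
      push_cast at this; exact this
    have hm1 : ((m:ℂ) + 1) ≠ 0 := by
      have := Nat.cast_ne_zero (R := ℂ).2 (Nat.succ_ne_zero m)
      push_cast at this; exact this
    have hm2 : ((m:ℂ) + 2) ≠ 0 := by
      have := Nat.cast_ne_zero (R := ℂ).2 (Nat.succ_ne_zero (m+1))
      push_cast at this
      exact fun h => this (by linear_combination h)
    push_cast
    have hD1 : (4:ℂ)^j * 4 * (((j:ℂ)+1) * (Nat.factorial j)) * (poch b j * (b + j)) *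
        (((m:ℂ)+1) * (Nat.factorial m)) ≠ 0 := by
      apply_rules [mul_ne_zero] <;> norm_num [hf]
    have hD2 : (4:ℂ)^j * 4 * (((j:ℂ)+1) * (Nat.factorial j)) * (poch b j * (b + j)) *
        ((Nat.factorial m : ℕ) : ℂ) ≠ 0 := by
      apply_rules [mul_ne_zero] <;> norm_num [hf]
    have hD3 : (4:ℂ)^j * (Nat.factorial j) * poch b j *
        (((m:ℂ)+1+1) * (((m:ℂ)+1) * (Nat.factorial m))) ≠ 0 := by
      have hm2' : ((m:ℂ)+1+1) ≠ 0 := by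
        intro h; exact hm2 (by linear_combination h)
      apply_rules [mul_ne_zero] <;> norm_num [hf]
    rw [← div_eq_mul_inv, ← div_eq_mul_inv, ← div_eq_mul_inv, ← div_eq_mul_inv,
      div_add_div _ _ hD2 hD3, div_sub_div _ _ (mul_ne_zero hD2 hD3) hD2,
      div_eq_div_iff hD1 (mul_ne_zero (mul_ne_zero hD2 hD3) hD2)]
    ring
  rcases le_or_gt (2*(j+1)) (n+1) with hB | hB
  · -- case B : n = 2j+1
    obtain rfl : n = 2*j + 1 := by omega
    have d1 : 2*j+1+1 - 2*(j+1) = 0 := by omega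
    have e1 : kt b (2*j+1+1) (j+1) =
        ((4:ℂ)^(j+1) * (Nat.factorial (j+1)) * poch b (j+1) * (Nat.factorial 0))⁻¹ := by
      rw [kt, if_pos (by omega), d1]
    have e2 : kt b (2*j+1) (j+1) = 0 := by rw [kt, if_neg (by omega)]
    have d3 : 2*j+1 - 2*j = 1 := by omega
    have e3 : kt b (2*j+1) j =
        ((4:ℂ)^j * (Nat.factorial j) * poch b j * (Nat.factorial 1))⁻¹ := by
      rw [kt, if_pos (by omega), d3]
    rw [ku, ku, e1, e2, e3, poch_succ, pow_succ, Nat.factorial_succ j]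
    have hj1 : ((j:ℂ) + 1) ≠ 0 := by
      have := Nat.cast_ne_zero (R := ℂ).2 (Nat.succ_ne_zero j)
      push_cast at this; exact this
    simp only [Nat.factorial_zero, Nat.factorial_one]
    push_cast
    field_simp [hf, h4, hP, hbj, hj1]
    ring
  · -- case C : n ≤ 2j
    have e1 : kt b (n+1) (j+1) = 0 := by rw [kt, if_neg (by omega)]
    have e2 : kt b n (j+1) = 0 := by rw [kt, if_neg (by omega)]
    have e3 : ku b n j = 0 := by
      rcases le_or_gt (2*j) n with h | h
      · obtain rfl : n = 2*j := by omega
        rw [ku]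
        push_cast
        ring
      · rw [ku, kt, if_neg (by omega), mul_zero]
    rw [e1, e2, e3, ku, e2]
    ring

lemma kD_rec {b : ℂ} (hb : ∀ l : ℕ, b + l ≠ 0) (n : ℕ) :
    ((n:ℂ)+1) * ((n:ℂ) + 2*b - 1) * kD b (n+1) = (2*(n:ℂ) + 2*b - 1) * kD b n := by
  have expand : kD b (n+1) = (∑ j ∈ Finset.range (n+1), kt b (n+1) (j+1)) + kt b (n+1) 0 := by
    rw [kD, Finset.sum_range_succ']
  rw [expand, mul_add, Finset.mul_sum]
  have : ∀ j ∈ Finset.range (n+1), ((n:ℂ)+1) * ((n:ℂ) + 2*b - 1) * kt b (n+1) (j+1) =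
      (2*(n:ℂ) + 2*b - 1) * kt b n (j+1) + (ku b n j - ku b n (j+1)) := by
    intro j _
    rw [key hb n j]
    ring
  have h1 : ku b n (n+1) = 0 := by
    rw [ku, kt, if_neg (by omega), mul_zero]
  have h2 : kt b n (n+1) = 0 := by
    rw [kt, if_neg (by omega)]
  have expand2 : kD b n = (∑ j ∈ Finset.range n, kt b n (j+1)) + kt b n 0 := by
    rw [kD, Finset.sum_range_succ']
  have expand3 : ∑ j ∈ Finset.range (n+1), kt b n (j+1) = ∑ j ∈ Finset.range n, kt b n (j+1) := by
    rw [Finset.sum_range_succ, h2, add_zero]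
  rw [Finset.sum_congr rfl this, Finset.sum_add_distrib, Finset.sum_range_sub' (ku b n),
    key0 hb n, h1, ← Finset.mul_sum, expand3, expand2]
  ring

/-- The coefficient of `x^n` in `₁F₁(α; 2α; 2x)`. -/
noncomputable def ka (α : ℂ) (n : ℕ) : ℂ :=
  poch α n * 2^n / (poch (2*α) n * (Nat.factorial n))

lemma ka_rec {α : ℂ} (h : ∀ l : ℕ, 2*α + l ≠ 0) (n : ℕ) :
    ((n:ℂ)+1) * ((n:ℂ) + 2*(α + 1/2) - 1) * ka α (n+1) = (2*(n:ℂ) + 2*(α + 1/2) - 1) * ka α n := by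
  have hf : ∀ m : ℕ, (Nat.factorial m : ℂ) ≠ 0 :=
    fun m => Nat.cast_ne_zero.2 (Nat.factorial_ne_zero m)
  have hP : poch (2*α) n ≠ 0 := poch_ne_zero h n
  have hPn : 2*α + (n:ℂ) ≠ 0 := h n
  have hn1 : ((n:ℂ) + 1) ≠ 0 := by
    have := Nat.cast_ne_zero (R := ℂ).2 (Nat.succ_ne_zero n)
    push_cast at this; exact this
  rw [ka, ka, poch_succ, poch_succ, Nat.factorial_succ]
  push_cast
  have hD1 : poch (2*α) n * (2*α + (n:ℂ)) * (((n:ℂ) + 1) * (Nat.factorial n)) ≠ 0 := by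
    apply_rules [mul_ne_zero] <;> norm_num [hf]
  have hD2 : poch (2*α) n * ((Nat.factorial n : ℕ) : ℂ) ≠ 0 := by
    apply_rules [mul_ne_zero] <;> norm_num [hf]
  rw [mul_div_assoc', mul_div_assoc', div_eq_div_iff hD1 hD2]
  ring

lemma ka_eq_kD {α : ℂ} (h1 : ∀ l : ℕ, 2*α + l ≠ 0) (h2 : ∀ l : ℕ, (α + 1/2) + l ≠ 0) (n : ℕ) :
    ka α n = kD (α + 1/2) n := by
  induction n with
  | zero =>
    simp [ka, kD, kt, poch_zero]
  | succ n ih =>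
    have hC : ((n:ℂ)+1) * ((n:ℂ) + 2*(α + 1/2) - 1) ≠ 0 := by
      apply mul_ne_zero
      · have := Nat.cast_ne_zero (R := ℂ).2 (Nat.succ_ne_zero n)
        push_cast at this; exact this
      · have := h1 n
        intro hc; apply this; linear_combination hc
    apply mul_left_cancel₀ hC
    rw [ka_rec h1 n, kD_rec h2 n, ih]

lemma exists_delta {c : ℂ} (h : ∀ l : ℕ, c + l ≠ 0) :
    ∃ δ : ℝ, 0 < δ ∧ δ ≤ 1 ∧ ∀ l : ℕ, δ ≤ ‖c + l‖ := by
  set N := ⌈‖c‖⌉₊ + 1 with hN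
  set S : Finset ℝ := insert 1 ((Finset.range N).image fun l : ℕ => ‖c + (l:ℂ)‖) with hS
  have hSne : S.Nonempty := ⟨1, by simp [hS]⟩
  refine ⟨S.min' hSne, ?_, ?_, ?_⟩
  · apply (Finset.lt_min'_iff S hSne).2
    intro y hy
    rcases Finset.mem_insert.1 hy with rfl | hy
    · norm_num
    · obtain ⟨l, -, rfl⟩ := Finset.mem_image.1 hy
      exact norm_pos_iff.2 (h l)
  · exact Finset.min'_le S 1 (by simp [hS])
  · intro l
    rcases lt_or_ge l N with hl | hl
    · exact Finset.min'_le S _ (by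
        apply Finset.mem_insert_of_mem
        exact Finset.mem_image.2 ⟨l, Finset.mem_range.2 hl, rfl⟩)
    · have h1 : (1:ℝ) ≤ ‖c + l‖ := by
        have : (l:ℝ) - ‖c‖ ≤ ‖c + l‖ := by
          have := norm_sub_norm_le ((l:ℂ)) (-c)
          simpa [add_comm, sub_neg_eq_add, Complex.norm_natCast] using this
        have : (N:ℝ) - ‖c‖ ≤ ‖c + l‖ := by
          refine le_trans ?_ this
          have : (N:ℝ) ≤ l := by exact_mod_cast hl
          linarith
        have hc : ‖c‖ ≤ (⌈‖c‖⌉₊ : ℝ) := Nat.le_ceil _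
        have : ((⌈‖c‖⌉₊ : ℝ) + 1) - ‖c‖ ≤ ‖c + l‖ := by
          refine le_trans ?_ this
          have : ((N:ℕ) : ℝ) = (⌈‖c‖⌉₊ : ℝ) + 1 := by rw [hN]; push_cast; ring
          linarith
        linarith
      exact le_trans (Finset.min'_le S 1 (by simp [hS])) h1

lemma poch_norm_lb {c : ℂ} {δ : ℝ} (hδ : 0 < δ) (hd : ∀ l : ℕ, δ ≤ ‖c + l‖) (k : ℕ) :
    δ ^ k ≤ ‖poch c k‖ := by
  rw [poch]
  calc δ ^ k = ∏ l ∈ Finset.range k, δ := by rw [Finset.prod_const, Finset.card_range]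
  _ ≤ ∏ l ∈ Finset.range k, ‖c + (l:ℂ)‖ :=
      Finset.prod_le_prod (fun _ _ => le_of_lt hδ) (fun l _ => hd l)
  _ = ‖∏ l ∈ Finset.range k, (c + (l:ℂ))‖ := by
      rw [norm_prod]

/-- `c` is not a nonpositive integer, i.e. `c ≠ 0, -1, -2, …`. -/
def NotNonposInt (c : ℂ) : Prop := ∀ n : ℕ, c ≠ -(n : ℂ)

set_option maxHeartbeats 1000000 in
theorem kummer_second_transformation_equiv (x α : ℂ)
    (h1 : NotNonposInt (2*α)) (h2 : NotNonposInt (α + 1/2)) :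
    pFq [α] [2*α] (2*x) = Complex.exp x * pFq [] [α + 1/2] (x^2/4) := by
  set β := α + 1/2 with hβ
  have h2a : ∀ l : ℕ, 2*α + l ≠ 0 := fun l hl => h1 l (by linear_combination hl)
  have hb : ∀ l : ℕ, β + l ≠ 0 := fun l hl => h2 l (by linear_combination hl)
  have hf : ∀ m : ℕ, (Nat.factorial m : ℂ) ≠ 0 :=
    fun m => Nat.cast_ne_zero.2 (Nat.factorial_ne_zero m)
  obtain ⟨δ, hδ0, hδ1, hδle⟩ := exists_delta hb
  set E : ℕ → ℂ := fun i => x^i / (Nat.factorial i) with hE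
  set G : ℕ → ℂ := fun j => 1 / poch β j * (x^2/4)^j / (Nat.factorial j) with hG
  -- series forms
  have hexp : Complex.exp x = ∑' i, E i := by
    rw [Complex.exp_eq_exp_ℂ, NormedSpace.exp_eq_tsum_div]
  have hrhs : pFq [] [β] (x^2/4) = ∑' j, G j := by
    unfold pFq
    apply tsum_congr
    intro j
    simp [hG]
  -- summability
  have hEnorm : Summable fun i => ‖E i‖ := by
    have := Real.summable_pow_div_factorial ‖x‖
    apply this.congr
    intro i
    simp [hE, norm_div, norm_pow]
  have hGnorm : Summable fun j => ‖G j‖ := by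
    refine Summable.of_nonneg_of_le (fun j => norm_nonneg _) (fun j => ?_)
      (Real.summable_pow_div_factorial (‖x‖^2 / (4*δ)))
    have hpoch : δ ^ j ≤ ‖poch β j‖ := poch_norm_lb hδ0 hδle j
    have hpoch0 : (0:ℝ) < ‖poch β j‖ := lt_of_lt_of_le (pow_pos hδ0 j) hpoch
    have : ‖G j‖ = 1/‖poch β j‖ * (‖x‖^2/4)^j / (Nat.factorial j) := by
      simp [hG, norm_div, norm_pow, Complex.norm_natCast]
    rw [this]
    rw [div_le_div_iff_of_pos_right (by positivity : (0:ℝ) < (Nat.factorial j))]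
    have e1 : (‖x‖^2 / (4*δ))^j = (1/δ^j) * (‖x‖^2/4)^j := by
      rw [div_pow, div_pow, mul_pow]
      field_simp
    rw [e1]
    apply mul_le_mul_of_nonneg_right _ (by positivity)
    rw [div_le_div_iff₀ hpoch0 (by positivity)]
    simpa using hpoch
  -- Cauchy product
  set F : ℕ × ℕ → ℂ := fun q => kt β q.1 q.2 * x ^ q.1 with hF
  set g : ℕ × ℕ → ℕ × ℕ := fun p => (p.1 + 2*p.2, p.2) with hg
  have hg_inj : Function.Injective g := by
    intro p q hpq
    simp only [hg, Prod.mk.injEq] at hpq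
    obtain ⟨h1', h2'⟩ := hpq
    exact Prod.ext (by omega) h2'
  have hzero : ∀ q ∉ Set.range g, F q = 0 := by
    intro q hq
    have : ¬ (2*q.2 ≤ q.1) := by
      intro hle
      exact hq ⟨(q.1 - 2*q.2, q.2), by simp only [hg]; exact Prod.ext (by omega) rfl⟩
    simp only [hF, kt, if_neg this, zero_mul]
  have hcomp : ∀ p : ℕ × ℕ, F (g p) = E p.1 * G p.2 := by
    intro ⟨i, j⟩
    have hsub : i + 2*j - 2*j = i := by omega
    simp only [hF, hg, kt, if_pos (by omega : 2*j ≤ i + 2*j), hsub, hE, hG]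
    rw [pow_add, div_pow, ← pow_mul]
    have h4 : ((4:ℂ))^j ≠ 0 := pow_ne_zero _ (by norm_num)
    rw [mul_inv, mul_inv, mul_inv]
    ring
  have hEGsum : Summable fun p : ℕ × ℕ => E p.1 * G p.2 :=
    (Summable.mul_norm hEnorm hGnorm).of_norm
  have hFsum : Summable F := by
    rw [← hg_inj.summable_iff hzero]
    exact hEGsum.congr (fun p => (hcomp p).symm)
  have hinner : ∀ n : ℕ, ∑' j, F (n, j) = kD β n * x^n := by
    intro n
    have : ∑' j, F (n, j) = ∑ j ∈ Finset.range (n+1), F (n, j) := by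
      apply tsum_eq_sum
      intro j hj
      have : ¬ (2*j ≤ n) := by
        simp only [Finset.mem_range] at hj
        omega
      simp only [hF, kt, if_neg this, zero_mul]
    rw [this, kD, Finset.sum_mul]
  have hlhs : pFq [α] [2*α] (2*x) = ∑' n, kD β n * x^n := by
    unfold pFq
    apply tsum_congr
    intro n
    have := ka_eq_kD h2a hb n
    rw [← hβ] at this
    rw [← this, ka]
    simp only [List.map_cons, List.map_nil, List.prod_cons, List.prod_nil, mul_one]
    rw [mul_pow]
    have hPn : poch (2*α) n ≠ 0 := poch_ne_zero h2a n
    field_simp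
  rw [hlhs, hexp, hrhs, tsum_mul_tsum_of_summable_norm hEnorm hGnorm]
  rw [show (fun z : ℕ × ℕ => E z.1 * G z.2) = (fun p => F (g p)) from funext fun p => (hcomp p).symm]
  rw [hg_inj.tsum_eq (Function.support_subset_iff'.2 hzero)]
  have hinnersum : ∀ n : ℕ, Summable fun j => F (n, j) := by
    intro n
    apply summable_of_ne_finset_zero (s := Finset.range (n+1))
    intro j hj
    have : ¬ (2*j ≤ n) := by
      simp only [Finset.mem_range] at hj
      omega
    simp only [hF, kt, if_neg this, zero_mul]
  rw [Summable.tsum_prod' hFsum hinnersum]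
  exact tsum_congr fun n => (hinner n).symm
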